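/- arXiv:math-ph/0006019 — 2 statements merged into one kernel-verified Lean document; each statement's English description precedes it below -/
import Mathlib

section
/- Let α, β ∈ {+1,−1} and consider the plane wave 1-form u with components u_μ = (C, 1, −iαβ, Cα) e^{−i(x⁰+αx³)} on Minkowski 4-space (C an arbitrary complex constant). Then u satisfies the polarised Maxwell equation *du = iβ du, and du ≠ 0 (u is a nontrivial, i.e., non-gradient, solution). -/
open Complex Finset

noncomputable section

abbrev Pt : Type := Fin 4 → ℝ

/-- Minkowski metric diagonal diag(+1,-1,-1,-1). -/
def mink : Fin 4 → ℝ := ![1, -1, -1, -1]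

/-- Totally antisymmetric symbol with eps 0 1 2 3 = 1. -/
def eps (k l m n : Fin 4) : ℝ :=
  Matrix.det (Matrix.of fun i j => if ![k, l, m, n] i = j then (1 : ℝ) else 0)

/-- Hodge star on rank-2 antisymmetric tensors: (*F)_{mn} = (1/2) F^{kl} eps_{klmn}. -/
def star2 (F : Fin 4 → Fin 4 → ℂ) (m n : Fin 4) : ℂ :=
  (1/2) * ∑ k, ∑ l, ((mink k * mink l * eps k l m n : ℝ) : ℂ) * F k l

/-- Partial derivative of a complex-valued function on Minkowski space. -/
def pd (m : Fin 4) (f : Pt → ℂ) (x : Pt) : ℂ :=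
  fderiv ℝ f x (Pi.single m 1)

/-- Exterior derivative of a 1-form. -/
def d1 (v : Fin 4 → Pt → ℂ) (m n : Fin 4) (x : Pt) : ℂ :=
  pd m (v n) x - pd n (v m) x

lemma eps_int (k l m n : Fin 4) : eps k l m n =
    ((Matrix.det (Matrix.of fun i j => if ![k,l,m,n] i = j then (1:ℤ) else 0) : ℤ) : ℝ) := by
  rw [eps]
  show _ = (Int.castRingHom ℝ) _
  rw [RingHom.map_det]
  congr 1
  ext i j
  simp [Matrix.map_apply, apply_ite]

lemma eps_val (k l m n : Fin 4) :
    eps k l m n = ((((l:ℤ)-(k:ℤ))*((m:ℤ)-(k:ℤ))*((n:ℤ)-(k:ℤ))*((m:ℤ)-(l:ℤ))*((n:ℤ)-(l:ℤ))*((n:ℤ)-(m:ℤ))/12 : ℤ) : ℝ) := by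
  rw [eps_int]
  congr 1
  revert k l m n
  decide

lemma hasD (α : ℝ) (x : Pt) :
    HasFDerivAt (fun x : Pt => Complex.exp (-(I * (x 0 + α * x 3))))
      (Complex.exp (-(I * (x 0 + α * x 3))) •
        (-(I • (Complex.ofRealCLM.comp (ContinuousLinearMap.proj 0) +
          (α:ℂ) • Complex.ofRealCLM.comp (ContinuousLinearMap.proj (3 : Fin 4)))))) x := by
  have h0 : HasFDerivAt (fun x : Pt => ((x 0 : ℝ) : ℂ))
      (Complex.ofRealCLM.comp (ContinuousLinearMap.proj 0)) x :=
    Complex.ofRealCLM.hasFDerivAt.comp x (hasFDerivAt_apply (0 : Fin 4) x)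
  have h3 : HasFDerivAt (fun x : Pt => ((x 3 : ℝ) : ℂ))
      (Complex.ofRealCLM.comp (ContinuousLinearMap.proj (3 : Fin 4))) x :=
    Complex.ofRealCLM.hasFDerivAt.comp x (hasFDerivAt_apply (3 : Fin 4) x)
  exact (((h0.add (h3.const_mul (α : ℂ))).const_mul I).neg).cexp

lemma pd_exp (α : ℝ) (c : ℂ) (m : Fin 4) (x : Pt) :
    pd m (fun x : Pt => c * Complex.exp (-(I * (x 0 + α * x 3)))) x
      = -(I * ![1, 0, 0, (α:ℂ)] m) * (c * Complex.exp (-(I * (x 0 + α * x 3)))) := by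
  have h := ((hasD α x).const_mul c).fderiv
  rw [pd, h]
  simp only [ContinuousLinearMap.smul_apply, ContinuousLinearMap.neg_apply,
    ContinuousLinearMap.add_apply, ContinuousLinearMap.comp_apply,
    ContinuousLinearMap.proj_apply, Complex.ofRealCLM_apply, smul_eq_mul]
  fin_cases m <;> simp <;> ring

set_option maxHeartbeats 2000000 in
/-- the plane wave u_m = (C, 1, −iαβ, Cα) e^{−i(x⁰+αx³)} satisfies the
polarised Maxwell equation *du = iβ du and is nontrivial (du ≠ 0). -/
theorem photon_plane_wave (α β : ℝ) (hα : α = 1 ∨ α = -1) (hβ : β = 1 ∨ β = -1)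
    (C : ℂ) (u : Fin 4 → Pt → ℂ)
    (hu : ∀ m x, u m x
      = ![C, 1, -(I * α * β), C * α] m * Complex.exp (-(I * (x 0 + α * x 3)))) :
    (∀ (m n : Fin 4) (x : Pt),
        star2 (fun k l => d1 u k l x) m n = I * β * d1 u m n x) ∧
    (∃ (m n : Fin 4) (x : Pt), d1 u m n x ≠ 0) := by
  have hu' : ∀ m, u m = fun x => ![C, 1, -(I * α * β), C * α] m *
      Complex.exp (-(I * (x 0 + α * x 3))) := fun m => funext (hu m)
  have hd1 : ∀ (m n : Fin 4) (x : Pt), d1 u m n x =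
      (-(I * ![1, 0, 0, (α:ℂ)] m) * ![C, 1, -(I * α * β), C * α] n
        + I * ![1, 0, 0, (α:ℂ)] n * ![C, 1, -(I * α * β), C * α] m)
      * Complex.exp (-(I * (x 0 + α * x 3))) := by
    intro m n x
    rw [d1, hu' m, hu' n, pd_exp, pd_exp]
    ring
  constructor
  · intro m n x
    rw [star2]
    simp only [hd1, Fin.sum_univ_four]
    set E := Complex.exp (-(I * (x 0 + α * x 3)))
    fin_cases m <;> fin_cases n <;>
    · simp only [eps_val, mink, Matrix.cons_val', Matrix.cons_val_zero, Matrix.cons_val_one,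
        Matrix.head_cons, Matrix.cons_val_two, Matrix.tail_cons, Matrix.cons_val_three,
        Matrix.head_fin_const, Matrix.cons_val_fin_one, Fin.isValue,
        show ((3:Fin 4):ℤ)=3 from rfl, show ((2:Fin 4):ℤ)=2 from rfl,
        show ((1:Fin 4):ℤ)=1 from rfl, show ((0:Fin 4):ℤ)=0 from rfl]
      rcases hα with rfl | rfl <;> rcases hβ with rfl | rfl <;>
        (try push_cast
         try ring_nf
         try simp only [Complex.I_sq]
         try ring_nf
         try norm_num
         try ring)
  · refine ⟨0, 1, 0, ?_⟩
    rw [hd1]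
    simp
end
end

section
/- Let α, β ∈ {+1,−1}, A a real covector field with A₃ ≡ 0 independent of x³, and φ, χ smooth complex functions of (x⁰,x¹,x²). Define v_μ = (φ, −χ, −iαβχ, αφ) e^{−iαx³} and ∇^β = ∂ + iβA. Then v satisfies *(d^β v) = iβ d^β v (with (d^β v)_{μν} = ∇^β_μ v_ν − ∇^β_ν v_μ) if and only if the pair (φ, χ) satisfies the 2D Dirac system: (i∇^β₀ − 1)φ + (i∇^β₁ − αβ∇^β₂)χ = 0 and (−i∇^β₁ − αβ∇^β₂)φ + (−i∇^β₀ − 1)χ = 0. -/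
open Complex Finset

noncomputable section

/-- Minimally coupled derivative ∇^β_m = ∂_m + iβ A_m acting on scalars. -/
def nab (A : Fin 4 → Pt → ℝ) (β : ℝ) (m : Fin 4) (f : Pt → ℂ) (x : Pt) : ℂ :=
  pd m f x + I * β * ((A m x : ℝ) : ℂ) * f x

/-- Minimally coupled exterior derivative d^β v = ∇^β ∧ v on 1-forms. -/
def dbeta (A : Fin 4 → Pt → ℝ) (β : ℝ) (v : Fin 4 → Pt → ℂ) (m n : Fin 4) (x : Pt) : ℂ :=
  (pd m (v n) x + I * β * ((A m x : ℝ) : ℂ) * v n x)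
    - (pd n (v m) x + I * β * ((A n x : ℝ) : ℂ) * v m x)

/-! ### Auxiliary material -/

lemma aux_epsZ_val : ∀ k l m n : Fin 4,
    (Matrix.of fun i j => if ![k, l, m, n] i = j then (1 : ℤ) else 0).det
      = Int.sign (((l:ℤ)-(k:ℤ))*((m:ℤ)-(k:ℤ))*((n:ℤ)-(k:ℤ))*((m:ℤ)-(l:ℤ))*((n:ℤ)-(l:ℤ))*((n:ℤ)-(m:ℤ))) := by
  decide

lemma aux_sign_ite (n : ℤ) :
    ((Int.sign n : ℤ) : ℝ) = if 0 < n then 1 else if n < 0 then -1 else 0 := by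
  rcases lt_trichotomy n 0 with h | h | h
  · simp [Int.sign_eq_neg_one_of_neg h, h, h.not_gt, h.ne]
  · simp [h]
  · simp [Int.sign_eq_one_of_pos h, h, h.not_gt]

lemma aux_eps_eval (k l m n : Fin 4) :
    eps k l m n
      = ((Int.sign (((l:ℤ)-(k:ℤ))*((m:ℤ)-(k:ℤ))*((n:ℤ)-(k:ℤ))*((m:ℤ)-(l:ℤ))*((n:ℤ)-(l:ℤ))*((n:ℤ)-(m:ℤ))) : ℤ) : ℝ) := by
  rw [eps, ← aux_epsZ_val,
    show (((Matrix.of fun i j => if ![k, l, m, n] i = j then (1 : ℤ) else 0).det : ℤ) : ℝ)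
      = (Int.castRingHom ℝ) (Matrix.of fun i j => if ![k, l, m, n] i = j then (1 : ℤ) else 0).det
    from rfl, RingHom.map_det]
  congr 1
  ext i j
  simp [apply_ite (Int.cast : ℤ → ℝ)]

lemma aux_v0 : ((0 : Fin 4) : ℕ) = 0 := rfl
lemma aux_v1 : ((1 : Fin 4) : ℕ) = 1 := rfl
lemma aux_v2 : ((2 : Fin 4) : ℕ) = 2 := rfl
lemma aux_v3 : ((3 : Fin 4) : ℕ) = 3 := rfl

set_option maxHeartbeats 2000000 in
lemma aux_star2_eval (F : Fin 4 → Fin 4 → ℂ) (m n : Fin 4) :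
    star2 F m n = ![![0, (F 2 3 - F 3 2)/2, (F 3 1 - F 1 3)/2, (F 1 2 - F 2 1)/2],
                    ![(F 3 2 - F 2 3)/2, 0, (F 3 0 - F 0 3)/2, (F 0 2 - F 2 0)/2],
                    ![(F 1 3 - F 3 1)/2, (F 0 3 - F 3 0)/2, 0, (F 1 0 - F 0 1)/2],
                    ![(F 2 1 - F 1 2)/2, (F 2 0 - F 0 2)/2, (F 0 1 - F 1 0)/2, 0]] m n := by
  fin_cases m <;> fin_cases n <;>
    norm_num (config := { decide := true })
      [star2, Fin.sum_univ_four, mink, aux_eps_eval, Matrix.cons_val_one, Matrix.cons_val_two,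
        Matrix.cons_val_three, Matrix.head_cons, Matrix.tail_cons, aux_sign_ite, aux_v0, aux_v1, aux_v2, aux_v3]
      <;> ring

lemma aux_mk0 : ∀ (h : 0 < 4), (⟨0, h⟩ : Fin 4) = (0 : Fin 4) := fun _ => rfl
lemma aux_mk1 : ∀ (h : 1 < 4), (⟨1, h⟩ : Fin 4) = (1 : Fin 4) := fun _ => rfl
lemma aux_mk2 : ∀ (h : 2 < 4), (⟨2, h⟩ : Fin 4) = (2 : Fin 4) := fun _ => rfl
lemma aux_mk3 : ∀ (h : 3 < 4), (⟨3, h⟩ : Fin 4) = (3 : Fin 4) := fun _ => rfl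

lemma aux_pd_neg (f : Pt → ℂ) (m : Fin 4) (x : Pt) :
    pd m (fun y => -f y) x = -pd m f x := by
  simp [pd, fderiv_neg]

lemma aux_pd_const_mul (f : Pt → ℂ) (c : ℂ) (m : Fin 4) (x : Pt)
    (hf : DifferentiableAt ℝ f x) :
    pd m (fun y => c * f y) x = c * pd m f x := by
  simp [pd, fderiv_const_mul hf]

lemma aux_pd3_zero (f : Pt → ℂ) (x : Pt) (hf : DifferentiableAt ℝ f x)
    (h : ∀ t, f (Function.update x 3 t) = f x) : pd 3 f x = 0 := by
  have hup : ∀ t : ℝ, x + t • (Pi.single 3 1 : Pt) = Function.update x 3 (x 3 + t) := by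
    intro t
    funext i
    by_cases hi : i = 3 <;> simp [hi, Function.update, Pi.single_apply]
  have hline : HasDerivAt (fun t : ℝ => x + t • (Pi.single 3 1 : Pt))
      (Pi.single (3 : Fin 4) (1 : ℝ)) 0 := by
    simpa using ((hasDerivAt_id (0 : ℝ)).smul_const (Pi.single (3 : Fin 4) (1 : ℝ))).const_add x
  have hcomp : HasDerivAt (fun t : ℝ => f (x + t • (Pi.single 3 1 : Pt)))
      (fderiv ℝ f x (Pi.single 3 1)) 0 := by
    have hf' : HasFDerivAt f (fderiv ℝ f x) (x + (0:ℝ) • (Pi.single 3 1 : Pt)) := by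
      simpa using hf.hasFDerivAt
    exact hf'.comp_hasDerivAt 0 hline
  have hconst : (fun t : ℝ => f (x + t • (Pi.single 3 1 : Pt))) = fun _ => f x := by
    funext t
    rw [hup t, h]
  rw [hconst] at hcomp
  have := hcomp.unique (hasDerivAt_const 0 (f x))
  simpa [pd] using this

lemma aux_pd_exp_mul (α : ℝ) (c : Pt → ℂ) (x : Pt) (hc : DifferentiableAt ℝ c x) (m : Fin 4) :
    pd m (fun y => c y * Complex.exp (-(I * α * y 3))) x
      = (pd m c x + (if m = 3 then -(I * α) * c x else 0)) * Complex.exp (-(I * α * x 3)) := by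
  have hfun : (fun y : Pt => Complex.exp (-(I * α * y 3)))
      = fun y : Pt => Complex.exp (-(I * (α:ℝ)) * ((y 3 : ℝ) : ℂ)) := by
    funext y; congr 1; ring
  have hL : HasFDerivAt (fun y : Pt => ((y 3 : ℝ) : ℂ))
      (Complex.ofRealCLM.comp (ContinuousLinearMap.proj 3 : Pt →L[ℝ] ℝ)) x :=
    (Complex.ofRealCLM.comp (ContinuousLinearMap.proj 3 : Pt →L[ℝ] ℝ)).hasFDerivAt
  have hg : HasDerivAt (fun z : ℂ => Complex.exp (-(I * α) * z))
      (Complex.exp (-(I * α) * ((x 3 : ℝ) : ℂ)) * (-(I * α))) ((x 3 : ℝ) : ℂ) := by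
    simpa using (((hasDerivAt_id (((x 3 : ℝ) : ℂ))).const_mul (-(I * α)))).cexp
  have hE : HasFDerivAt (fun y : Pt => Complex.exp (-(I * α * y 3)))
      ((ContinuousLinearMap.smulRight (1 : ℂ →L[ℂ] ℂ)
          (Complex.exp (-(I * α) * ((x 3 : ℝ) : ℂ)) * (-(I * α)))).restrictScalars ℝ
        |>.comp (Complex.ofRealCLM.comp (ContinuousLinearMap.proj 3 : Pt →L[ℝ] ℝ))) x := by
    rw [hfun]
    exact HasFDerivAt.comp x (g := fun z : ℂ => Complex.exp (-(I * α) * z))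
      (by exact hg.hasFDerivAt.restrictScalars ℝ) hL
  have H := (hc.hasFDerivAt.mul hE).fderiv
  rw [pd, show (fun y => c y * Complex.exp (-(I * α * y 3)))
      = c * fun y => Complex.exp (-(I * α * y 3)) from rfl, H]
  simp only [ContinuousLinearMap.add_apply, ContinuousLinearMap.smul_apply,
    ContinuousLinearMap.coe_comp', Function.comp_apply,
    ContinuousLinearMap.coe_restrictScalars', ContinuousLinearMap.smulRight_apply,
    ContinuousLinearMap.proj_apply, Complex.ofRealCLM_apply,
    ContinuousLinearMap.one_apply, smul_eq_mul]
  rw [Pi.single_apply]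
  by_cases hm : m = 3
  · subst hm
    norm_num [pd]
    rw [show -(I * (α:ℂ) * ((x 3:ℝ):ℂ)) = -(I * α) * ((x 3 : ℝ):ℂ) by ring]
    ring
  · have h3m : (3 : Fin 4) ≠ m := Ne.symm hm
    norm_num [pd, hm, h3m]
    rw [show -(I * (α:ℂ) * ((x 3:ℝ):ℂ)) = -(I * α) * ((x 3 : ℝ):ℂ) by ring]
    ring

/-- The coupled-derivative components N_m v_n, divided by the exponential factor. -/
def Dc (A : Fin 4 → Pt → ℝ) (α β : ℝ) (φ χ : Pt → ℂ) (m n : Fin 4) (x : Pt) : ℂ :=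
  ![![nab A β 0 φ x, -nab A β 0 χ x, -(I*(α:ℂ)*(β:ℂ)) * nab A β 0 χ x, (α:ℂ) * nab A β 0 φ x],
    ![nab A β 1 φ x, -nab A β 1 χ x, -(I*(α:ℂ)*(β:ℂ)) * nab A β 1 χ x, (α:ℂ) * nab A β 1 φ x],
    ![nab A β 2 φ x, -nab A β 2 χ x, -(I*(α:ℂ)*(β:ℂ)) * nab A β 2 χ x, (α:ℂ) * nab A β 2 φ x],
    ![-(I*(α:ℂ)) * φ x, (I*(α:ℂ)) * χ x, (I*(α:ℂ))*(I*(α:ℂ)*(β:ℂ)) * χ x,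
        -(I*(α:ℂ)) * ((α:ℂ) * φ x)]] m n

set_option maxHeartbeats 1000000 in
lemma aux_dbeta_formula (α β : ℝ)
    (A : Fin 4 → Pt → ℝ) (hA3 : ∀ x, A 3 x = 0)
    (φ χ : Pt → ℂ)
    (hφd : ∀ y, DifferentiableAt ℝ φ y) (hχd : ∀ y, DifferentiableAt ℝ χ y)
    (hφ3 : ∀ x t, φ (Function.update x 3 t) = φ x)
    (hχ3 : ∀ x t, χ (Function.update x 3 t) = χ x)
    (v : Fin 4 → Pt → ℂ)
    (hv : ∀ m x, v m x
      = ![φ x, -χ x, -(I * α * β) * χ x, (α : ℂ) * φ x] m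
          * Complex.exp (-(I * α * x 3))) :
    ∀ (m n : Fin 4) (x : Pt), dbeta A β v m n x
      = Complex.exp (-(I * α * x 3)) * (Dc A α β φ χ m n x - Dc A α β φ χ n m x) := by
  intro m n x
  have hcc : ∀ (k : Fin 4),
      DifferentiableAt ℝ (fun y => ![φ y, -χ y, -(I * α * β) * χ y, (α : ℂ) * φ y] k) x := by
    intro k
    fin_cases k
    · exact hφd x
    · exact (hχd x).neg
    · exact (hχd x).const_mul _
    · exact (hφd x).const_mul _
  have hp3φ : ∀ y, pd 3 φ y = 0 := fun y => aux_pd3_zero φ y (hφd y) (hφ3 y)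
  have hp3χ : ∀ y, pd 3 χ y = 0 := fun y => aux_pd3_zero χ y (hχd y) (hχ3 y)
  have hpdn : ∀ (m : Fin 4) (y : Pt), pd m (fun z => -χ z) y = -pd m χ y :=
    fun m y => aux_pd_neg χ m y
  have hpdc2 : ∀ (m : Fin 4) (y : Pt),
      pd m (fun z => -(I * α * β) * χ z) y = -(I * α * β) * pd m χ y :=
    fun m y => aux_pd_const_mul χ _ m y (hχd y)
  have hpdc2' : ∀ (m : Fin 4) (y : Pt),
      pd m (fun z => -(I * α * β * χ z)) y = -(I * α * β) * pd m χ y := by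
    intro m y
    rw [aux_pd_neg (fun z => I * (α:ℂ) * (β:ℂ) * χ z) m y,
      aux_pd_const_mul χ (I * (α:ℂ) * (β:ℂ)) m y (hχd y)]
    ring
  have hpdc3 : ∀ (m : Fin 4) (y : Pt),
      pd m (fun z => (α : ℂ) * φ z) y = (α : ℂ) * pd m φ y :=
    fun m y => aux_pd_const_mul φ _ m y (hφd y)
  have hmk0 : ∀ (h : 0 < 4), (⟨0, h⟩ : Fin 4) = (0 : Fin 4) := fun _ => rfl
  have hmk1 : ∀ (h : 1 < 4), (⟨1, h⟩ : Fin 4) = (1 : Fin 4) := fun _ => rfl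
  have hmk2 : ∀ (h : 2 < 4), (⟨2, h⟩ : Fin 4) = (2 : Fin 4) := fun _ => rfl
  have hmk3 : ∀ (h : 3 < 4), (⟨3, h⟩ : Fin 4) = (3 : Fin 4) := fun _ => rfl
  have hv' : ∀ k, v k = fun y =>
      ![φ y, -χ y, -(I * α * β) * χ y, (α : ℂ) * φ y] k * Complex.exp (-(I * α * y 3)) :=
    fun k => funext fun y => hv k y
  simp only [dbeta, hv']
  rw [aux_pd_exp_mul α _ x (hcc n) m, aux_pd_exp_mul α _ x (hcc m) n]
  fin_cases m <;> fin_cases n <;>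
    norm_num (config := { decide := true }) [Dc, nab] <;>
    simp only [hmk0, hmk1, hmk2, hmk3, hpdn, hpdc2, hpdc2', hpdc3, hp3φ, hp3χ, hA3] <;>
    norm_num <;>
    ring

/-- main theorem: for v_m = (φ, −χ, −iαβχ, αφ)e^{−iαx³}, the perturbed
polarised Maxwell equation *(d^β v) = iβ d^β v is equivalent to the 2D Dirac system
(i∇₀−1)φ + (i∇₁−αβ∇₂)χ = 0,  (−i∇₁−αβ∇₂)φ + (−i∇₀−1)χ = 0. -/
theorem tensor_model_equiv_2D_Dirac (α β : ℝ) (hα : α = 1 ∨ α = -1)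
    (hβ : β = 1 ∨ β = -1)
    (A : Fin 4 → Pt → ℝ) (hA3 : ∀ x, A 3 x = 0)
    (hAind : ∀ m x t, A m (Function.update x 3 t) = A m x)
    (φ χ : Pt → ℂ) (hφ : ContDiff ℝ (⊤ : ℕ∞) φ) (hχ : ContDiff ℝ (⊤ : ℕ∞) χ)
    (hφ3 : ∀ x t, φ (Function.update x 3 t) = φ x)
    (hχ3 : ∀ x t, χ (Function.update x 3 t) = χ x)
    (v : Fin 4 → Pt → ℂ)
    (hv : ∀ m x, v m x
      = ![φ x, -χ x, -(I * α * β) * χ x, (α : ℂ) * φ x] m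
          * Complex.exp (-(I * α * x 3))) :
    (∀ (m n : Fin 4) (x : Pt),
        star2 (fun k l => dbeta A β v k l x) m n = I * β * dbeta A β v m n x)
    ↔ (∀ x : Pt,
        (I * nab A β 0 φ x - φ x) + (I * nab A β 1 χ x - α * β * nab A β 2 χ x) = 0 ∧
        (-(I * nab A β 1 φ x) - α * β * nab A β 2 φ x)
          + (-(I * nab A β 0 χ x) - χ x) = 0) := by
  have hφd : ∀ y, DifferentiableAt ℝ φ y := fun y => (hφ.differentiable (by simp)).differentiableAt
  have hχd : ∀ y, DifferentiableAt ℝ χ y := fun y => (hχ.differentiable (by simp)).differentiableAt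
  have hW := aux_dbeta_formula α β A hA3 φ χ hφd hχd hφ3 hχ3 v hv
  have ha : (α:ℂ) * α = 1 := by rcases hα with h | h <;> rw [h] <;> norm_num
  have hb : (β:ℂ) * β = 1 := by rcases hβ with h | h <;> rw [h] <;> norm_num
  constructor
  · intro h x
    have hE := Complex.exp_ne_zero (-(I * (α:ℂ) * ((x 3 : ℝ):ℂ)))
    have h01 := h 0 1 x
    have h03 := h 0 3 x
    rw [aux_star2_eval] at h01 h03
    simp only [hW, Dc, Matrix.cons_val_zero, Matrix.cons_val_one, Matrix.head_cons,
      Matrix.cons_val_two, Matrix.tail_cons, Matrix.cons_val_three] at h01 h03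
    constructor
    · refine mul_left_cancel₀ hE ?_
      linear_combination (-(α:ℂ)*β) * h03
        + (Complex.exp (-(I * α * x 3)) * (-(I*(β:ℂ)*β*nab A β 0 φ x)
            - I*(β:ℂ)*β*nab A β 1 χ x + (β:ℂ)*β*φ x)) * ha
        + (Complex.exp (-(I * α * x 3)) * (-(I*nab A β 0 φ x) - I*nab A β 1 χ x + φ x)) * hb
        + (Complex.exp (-(I * α * x 3)) * (-((α:ℂ)*α*β*β*φ x))) * Complex.I_mul_I
    · refine mul_left_cancel₀ hE ?_
      linear_combination (-(β:ℂ)) * h01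
        + (Complex.exp (-(I * α * x 3)) * (I*nab A β 1 φ x + I*nab A β 0 χ x + χ x)) * hb
        + (Complex.exp (-(I * α * x 3)) * ((β:ℂ)*β*χ x)) * ha
        + (Complex.exp (-(I * α * x 3)) * (-((α:ℂ)*α*β*β*χ x))) * Complex.I_mul_I
  · intro h m n x
    obtain ⟨e1, e2⟩ := h x
    have R01 : Dc A α β φ χ 2 3 x - Dc A α β φ χ 3 2 x
        = I * β * (Dc A α β φ χ 0 1 x - Dc A α β φ χ 1 0 x) := by
      simp only [Dc, Matrix.cons_val_zero, Matrix.cons_val_one, Matrix.head_cons,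
        Matrix.cons_val_two, Matrix.tail_cons, Matrix.cons_val_three]
      linear_combination (-(β:ℂ)) * e2 + (-(α:ℂ)*nab A β 2 φ x) * hb
        + (-((β:ℂ)*χ x*α*α)) * Complex.I_mul_I + ((β:ℂ)*χ x) * ha
    have R23 : Dc A α β φ χ 0 1 x - Dc A α β φ χ 1 0 x
        = -(I * β) * (Dc A α β φ χ 2 3 x - Dc A α β φ χ 3 2 x) := by
      simp only [Dc, Matrix.cons_val_zero, Matrix.cons_val_one, Matrix.head_cons,
        Matrix.cons_val_two, Matrix.tail_cons, Matrix.cons_val_three]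
      linear_combination (-(I:ℂ)) * e2
        + (-nab A β 0 χ x - nab A β 1 φ x - I*(α:ℂ)*α*β*β*χ x) * Complex.I_mul_I
        + (I*(β:ℂ)*β*χ x) * ha + (I*χ x) * hb
    have R02 : Dc A α β φ χ 1 3 x - Dc A α β φ χ 3 1 x
        = -(I * β) * (Dc A α β φ χ 0 2 x - Dc A α β φ χ 2 0 x) := by
      simp only [Dc, Matrix.cons_val_zero, Matrix.cons_val_one, Matrix.head_cons,
        Matrix.cons_val_two, Matrix.tail_cons, Matrix.cons_val_three]
      linear_combination (I*(α:ℂ)) * e2 + ((α:ℂ)*nab A β 1 φ x) * Complex.I_mul_I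
        + (-(I*I*(α:ℂ)*nab A β 0 χ x)) * hb + (I*(β:ℂ)*nab A β 2 φ x) * ha
    have R13 : Dc A α β φ χ 0 2 x - Dc A α β φ χ 2 0 x
        = I * β * (Dc A α β φ χ 1 3 x - Dc A α β φ χ 3 1 x) := by
      simp only [Dc, Matrix.cons_val_zero, Matrix.cons_val_one, Matrix.head_cons,
        Matrix.cons_val_two, Matrix.tail_cons, Matrix.cons_val_three]
      linear_combination ((α:ℂ)*β) * e2 + ((β:ℂ)*β*nab A β 2 φ x) * ha
        + (nab A β 2 φ x) * hb + ((α:ℂ)*β*χ x) * Complex.I_mul_I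
    have R03 : Dc A α β φ χ 1 2 x - Dc A α β φ χ 2 1 x
        = I * β * (Dc A α β φ χ 0 3 x - Dc A α β φ χ 3 0 x) := by
      simp only [Dc, Matrix.cons_val_zero, Matrix.cons_val_one, Matrix.head_cons,
        Matrix.cons_val_two, Matrix.tail_cons, Matrix.cons_val_three]
      linear_combination (-((α:ℂ)*β)) * e1 + (-((β:ℂ)*β*nab A β 2 χ x)) * ha
        + (-nab A β 2 χ x) * hb + (-((α:ℂ)*β*φ x)) * Complex.I_mul_I
    have R12 : Dc A α β φ χ 0 3 x - Dc A α β φ χ 3 0 x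
        = -(I * β) * (Dc A α β φ χ 1 2 x - Dc A α β φ χ 2 1 x) := by
      simp only [Dc, Matrix.cons_val_zero, Matrix.cons_val_one, Matrix.head_cons,
        Matrix.cons_val_two, Matrix.tail_cons, Matrix.cons_val_three]
      linear_combination (-(I*(α:ℂ))) * e1 + ((α:ℂ)*nab A β 0 φ x) * Complex.I_mul_I
        + (-(I*I*(α:ℂ)*nab A β 1 χ x)) * hb + (-(I*(β:ℂ)*nab A β 2 χ x)) * ha
    rw [aux_star2_eval]
    simp only [hW]
    fin_cases m <;> fin_cases n <;>
      simp only [aux_mk0, aux_mk1, aux_mk2, aux_mk3, Matrix.cons_val_zero, Matrix.cons_val_one,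
        Matrix.head_cons, Matrix.cons_val_two, Matrix.tail_cons, Matrix.cons_val_three,
        Fin.isValue]
    · ring
    · linear_combination Complex.exp (-(I * α * x 3)) * R01
    · linear_combination (-Complex.exp (-(I * α * x 3))) * R02
    · linear_combination Complex.exp (-(I * α * x 3)) * R03
    · linear_combination (-Complex.exp (-(I * α * x 3))) * R01
    · ring
    · linear_combination (-Complex.exp (-(I * α * x 3))) * R12
    · linear_combination Complex.exp (-(I * α * x 3)) * R13
    · linear_combination Complex.exp (-(I * α * x 3)) * R02
    · linear_combination Complex.exp (-(I * α * x 3)) * R12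
    · ring
    · linear_combination (-Complex.exp (-(I * α * x 3))) * R23
    · linear_combination (-Complex.exp (-(I * α * x 3))) * R03
    · linear_combination (-Complex.exp (-(I * α * x 3))) * R13
    · linear_combination Complex.exp (-(I * α * x 3)) * R23
    · ring
end
end
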